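/- Let N be a nonempty finite type with m = |N| elements, let β be a countable type, let P, Q : N → PMF β be families of probability mass functions, let ε ≥ 0, let n₀ ∈ N, and let σ : N → N be a function whose restriction to N \ {n₀} is injective. Suppose that for every n ∈ N with n ≠ n₀, the statistical distance between P(n) and Q(σ(n)) is at most ε. Let P̄ be the uniform mixture (1/m) ∑_{n ∈ N} P(n) and Q̄ the uniform mixture (1/m) ∑_{n ∈ N} Q(n). Then the statistical distance between P̄ and Q̄ is at most ε + 1/m. -/

import Mathlib

/-- Statistical distance between two probability mass functions:
`SD(p, q) = (1/2) * ∑_s |p(s) - q(s)|`. -/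
noncomputable def SD {α : Type*} (p q : PMF α) : ℝ :=
  (1 / 2) * ∑' a, |(p a).toReal - (q a).toReal|

/-!
Statistical distance is jointly convex, so the distance between the two uniform mixtures is at
most the average of the componentwise distances. Reindexing the `Q`-mixture by a permutation `τ`
of `N` extending `σ` away from `n₀` does not change it; after that, every term of the average is
at most `ε`, except the one at `n₀`, which is at most `1`.
-/

open Finset

theorem Set.InjOn.exists_perm_eqOn {α : Type*} [Finite α] {f : α → α} {s : Set α}
    (hf : s.InjOn f) : ∃ τ : Equiv.Perm α, s.EqOn τ f := by
  obtain ⟨τ, hτ⟩ := Equiv.Perm.exists_extending_pair (Subtype.val : s → α) (s.domRestrict f)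
    Subtype.val_injective hf.injective
  exact ⟨τ, fun a ha => hτ ⟨a, ha⟩⟩

namespace PMF

variable {α β : Type*}

lemma summable_toReal (p : PMF α) : Summable fun a => (p a).toReal :=
  ENNReal.summable_toReal p.tsum_coe_ne_top

lemma tsum_toReal (p : PMF α) : ∑' a, (p a).toReal = 1 := by
  rw [← ENNReal.tsum_toReal_eq p.apply_ne_top, p.tsum_coe, ENNReal.toReal_one]

lemma summable_abs_sub_toReal (p q : PMF α) :
    Summable fun a => |(p a).toReal - (q a).toReal| :=
  (p.summable_toReal.sub q.summable_toReal).abs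

lemma toReal_bind_apply [Fintype α] (μ : PMF α) (P : α → PMF β) (b : β) :
    (μ.bind P b).toReal = ∑ a, (μ a).toReal * (P a b).toReal := by
  rw [bind_apply, tsum_fintype, ENNReal.toReal_sum fun a _ =>
    ENNReal.mul_ne_top (μ.apply_ne_top a) ((P a).apply_ne_top b)]
  simp only [ENNReal.toReal_mul]

lemma uniformOfFintype_bind_comp_perm [Fintype α] [Nonempty α] (τ : Equiv.Perm α)
    (Q : α → PMF β) : (uniformOfFintype α).bind (Q ∘ τ) = (uniformOfFintype α).bind Q := by
  ext b
  simp only [bind_apply, tsum_fintype, uniformOfFintype_apply, Function.comp_apply]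
  exact Equiv.sum_comp τ fun a => (Fintype.card α : ENNReal)⁻¹ * Q a b

end PMF

lemma SD_le_one {α : Type*} (p q : PMF α) : SD p q ≤ 1 := by
  have hle : ∑' a, |(p a).toReal - (q a).toReal| ≤ ∑' a, ((p a).toReal + (q a).toReal) :=
    Summable.tsum_le_tsum
      (fun a => abs_sub_le_of_nonneg_of_le ENNReal.toReal_nonneg (le_add_of_nonneg_right
        ENNReal.toReal_nonneg) ENNReal.toReal_nonneg (le_add_of_nonneg_left ENNReal.toReal_nonneg))
      (p.summable_abs_sub_toReal q) (p.summable_toReal.add q.summable_toReal)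
  rw [p.summable_toReal.tsum_add q.summable_toReal, p.tsum_toReal, q.tsum_toReal] at hle
  rw [SD]; linarith

lemma SD_bind_le {α β : Type*} [Fintype α] (μ : PMF α) (P Q : α → PMF β) :
    SD (μ.bind P) (μ.bind Q) ≤ ∑ a, (μ a).toReal * SD (P a) (Q a) := by
  have hpt : ∀ b, |(μ.bind P b).toReal - (μ.bind Q b).toReal| ≤
      ∑ a, (μ a).toReal * |(P a b).toReal - (Q a b).toReal| := by
    intro b
    rw [PMF.toReal_bind_apply, PMF.toReal_bind_apply, ← sum_sub_distrib]
    refine (abs_sum_le_sum_abs _ _).trans_eq (sum_congr rfl fun a _ => ?_)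
    rw [← mul_sub, abs_mul, abs_of_nonneg ENNReal.toReal_nonneg]
  have hsum : ∀ a ∈ (univ : Finset α),
      Summable fun b => (μ a).toReal * |(P a b).toReal - (Q a b).toReal| :=
    fun a _ => ((P a).summable_abs_sub_toReal (Q a)).mul_left _
  calc SD (μ.bind P) (μ.bind Q)
      ≤ 1 / 2 * ∑' b, ∑ a, (μ a).toReal * |(P a b).toReal - (Q a b).toReal| := by
        rw [SD]; gcongr 1 / 2 * ?_
        exact Summable.tsum_le_tsum hpt ((μ.bind P).summable_abs_sub_toReal _) (summable_sum hsum)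
    _ = ∑ a, (μ a).toReal * SD (P a) (Q a) := by
        rw [Summable.tsum_finsetSum hsum, mul_sum]
        refine sum_congr rfl fun a _ => ?_
        rw [tsum_mul_left, SD]; ring

theorem sd_uniform_mixture_le_general {N β : Type*} [Fintype N] [Nonempty N]
    (P Q : N → PMF β) (ε : ℝ) (hε : 0 ≤ ε) (n₀ : N) (σ : N → N)
    (hσ : Set.InjOn σ {n₀}ᶜ)
    (h : ∀ n : N, n ≠ n₀ → SD (P n) (Q (σ n)) ≤ ε) :
    SD ((PMF.uniformOfFintype N).bind P) ((PMF.uniformOfFintype N).bind Q) ≤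
      ε + 1 / (Fintype.card N) := by
  classical
  obtain ⟨τ, hτ⟩ := hσ.exists_perm_eqOn
  have hclose : ∀ n, SD (P n) (Q (τ n)) ≤ ε + if n = n₀ then 1 else 0 := by
    intro n
    by_cases hn : n = n₀
    · simpa [hn] using (SD_le_one _ _).trans (le_add_of_nonneg_left hε)
    · simpa [hn, hτ hn] using h n hn
  calc SD ((PMF.uniformOfFintype N).bind P) ((PMF.uniformOfFintype N).bind Q)
      = SD ((PMF.uniformOfFintype N).bind P) ((PMF.uniformOfFintype N).bind (Q ∘ τ)) := by
        rw [PMF.uniformOfFintype_bind_comp_perm]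
    _ ≤ ∑ n, (Fintype.card N : ℝ)⁻¹ * SD (P n) (Q (τ n)) := by
        simpa using SD_bind_le (PMF.uniformOfFintype N) P (Q ∘ τ)
    _ ≤ ∑ n, (Fintype.card N : ℝ)⁻¹ * (ε + if n = n₀ then 1 else 0) := by
        gcongr with n; exact hclose n
    _ = ε + 1 / (Fintype.card N) := by
        rw [← mul_sum, sum_add_distrib, sum_ite_eq', sum_const, card_univ, nsmul_eq_mul]
        field_simp; simp

/-- Concluding step of Claim 4.5: if, except for one index `n₀` out of the
`m = |N|` equally likely indices, each component `P n` is `ε`-close to the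
unique component `Q (σ n)` (with `σ` injective away from `n₀`), then the
uniform mixtures are `(ε + 1/m)`-close. -/
theorem sd_uniform_mixture_le {N β : Type*} [Fintype N] [Nonempty N] [Countable β]
    (P Q : N → PMF β) (ε : ℝ) (hε : 0 ≤ ε) (n₀ : N) (σ : N → N)
    (hσ : Set.InjOn σ {n₀}ᶜ)
    (h : ∀ n : N, n ≠ n₀ → SD (P n) (Q (σ n)) ≤ ε) :
    SD ((PMF.uniformOfFintype N).bind P) ((PMF.uniformOfFintype N).bind Q) ≤
      ε + 1 / (Fintype.card N) :=
  sd_uniform_mixture_le_general P Q ε hε n₀ σ hσ h
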